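/- arXiv:2603.02501 — 2 statements merged into one kernel-verified Lean document; each statement's English description precedes it below -/
import Mathlib

section
/- Let G be a graph with vertices a, b admitting an Eulerian trail from a to b, labeled by γ in an abelian group Γ. Then every Eulerian trail of G from a to b has the same label if and only if there exists a shifting γ' of γ such that the subgroup of Γ generated by all γ'-labels of edges is isomorphic to (ℤ/2ℤ)^k for some k. -/
/- A finite multigraph is given by a vertex type `V`, an edge type `E`, and an endpoint
map `ends : E → V × V` (each edge is given with a reference orientation; the graph is
undirected, so each edge may be traversed both ways). An arc is a pair `(e, d)`:
`(e, true)` traverses `e` from `(ends e).1` to `(ends e).2`, and `(e, false)` the other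
way. -/

variable {V E : Type}

/-- The tail of an arc. -/
def arcTail (ends : E → V × V) (p : E × Bool) : V :=
  if p.2 then (ends p.1).1 else (ends p.1).2

/-- The head of an arc. -/
def arcHead (ends : E → V × V) (p : E × Bool) : V :=
  if p.2 then (ends p.1).2 else (ends p.1).1

/-- A trail: a sequence of arcs with pairwise distinct underlying edges, the head of each
arc being the tail of the next. -/
def IsTrail (ends : E → V × V) (T : List (E × Bool)) : Prop :=
  (T.map Prod.fst).Nodup ∧ T.Chain' (fun p q => arcHead ends p = arcTail ends q)

/-- A (nonempty) trail from `u` to `v`. -/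
def IsTrailFromTo (ends : E → V × V) (T : List (E × Bool)) (u v : V) : Prop :=
  IsTrail ends T ∧ T.head?.map (arcTail ends) = some u ∧
    T.getLast?.map (arcHead ends) = some v

/-- An Eulerian trail from `u` to `v`: a trail from `u` to `v` using every edge
(exactly once, by the trail property). -/
def IsEulerianTrail (ends : E → V × V) (T : List (E × Bool)) (u v : V) : Prop :=
  IsTrailFromTo ends T u v ∧ ∀ e : E, e ∈ T.map Prod.fst

/-- A circuit: a closed trail. -/
def IsCircuit (ends : E → V × V) (T : List (E × Bool)) : Prop :=
  ∃ v, IsTrailFromTo ends T v v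

/-- Adjacency via some edge. -/
def Adj (ends : E → V × V) (u v : V) : Prop :=
  ∃ e, ends e = (u, v) ∨ ends e = (v, u)

/-- Reachability in the multigraph. -/
def Reach (ends : E → V × V) : V → V → Prop :=
  Relation.ReflTransGen (Adj ends)

/-- Reachability using only edges from `S`. -/
def ReachVia (ends : E → V × V) (S : Set E) : V → V → Prop :=
  Relation.ReflTransGen (fun u v => ∃ e ∈ S, ends e = (u, v) ∨ ends e = (v, u))

/-- The degree of a vertex (loops counted twice). -/
noncomputable def degree (ends : E → V × V) (v : V) : ℕ :=
  {e | (ends e).1 = v}.ncard + {e | (ends e).2 = v}.ncard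

/-- The set of edges with exactly one end in `X`. -/
def edgeCut (ends : E → V × V) (X : Set V) : Set E :=
  {e | ¬ ((ends e).1 ∈ X ↔ (ends e).2 ∈ X)}

/- Group-labelings: a labeling `γ : E → Γ` gives the label of the reference orientation
of each edge; the reverse orientation is labeled by the inverse. -/

variable {Γ : Type}

/-- The label of an arc. -/
def arcLabel [Group Γ] (γ : E → Γ) (p : E × Bool) : Γ :=
  if p.2 then γ p.1 else (γ p.1)⁻¹

/-- The label of a trail: the ordered product of the labels of its arcs. -/
def trailLabel [Group Γ] (γ : E → Γ) (T : List (E × Bool)) : Γ :=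
  (T.map (arcLabel γ)).prod

/-- The labeling obtained from `γ` by shifting by `f v` at each vertex `v`: each arc with
tail `u` and head `w` gets its label multiplied by `f u` on the left and `(f w)⁻¹` on the
right.  (A finite sequence of shiftings at single vertices amounts to exactly such a
simultaneous shifting.) -/
def shiftLabel [Group Γ] (ends : E → V × V) (γ : E → Γ) (f : V → Γ) : E → Γ :=
  fun e => f (ends e).1 * γ e * (f (ends e).2)⁻¹

namespace Stmt14Aux

variable {V E Γ : Type} [CommGroup Γ]

/-- The reversed arc. -/
def revArc (p : E × Bool) : E × Bool := (p.1, !p.2)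

@[simp] lemma revArc_fst (p : E × Bool) : (revArc p).1 = p.1 := rfl

@[simp] lemma arcTail_revArc (ends : E → V × V) (p : E × Bool) :
    arcTail ends (revArc p) = arcHead ends p := by
  obtain ⟨e, d⟩ := p; cases d <;> simp [revArc, arcTail, arcHead]

@[simp] lemma arcHead_revArc (ends : E → V × V) (p : E × Bool) :
    arcHead ends (revArc p) = arcTail ends p := by
  obtain ⟨e, d⟩ := p; cases d <;> simp [revArc, arcTail, arcHead]

@[simp] lemma arcLabel_revArc (γ : E → Γ) (p : E × Bool) :
    arcLabel γ (revArc p) = (arcLabel γ p)⁻¹ := by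
  obtain ⟨e, d⟩ := p; cases d <;> simp [revArc, arcLabel]

lemma trailLabel_append (γ : E → Γ) (X Y : List (E × Bool)) :
    trailLabel γ (X ++ Y) = trailLabel γ X * trailLabel γ Y := by
  simp [trailLabel]

lemma trailLabel_cons (γ : E → Γ) (p : E × Bool) (L : List (E × Bool)) :
    trailLabel γ (p :: L) = arcLabel γ p * trailLabel γ L := by
  simp [trailLabel]

lemma trailLabel_revSeg (γ : E → Γ) (B : List (E × Bool)) :
    trailLabel γ (B.reverse.map revArc) = (trailLabel γ B)⁻¹ := by
  unfold trailLabel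
  rw [List.map_map, List.map_reverse, List.prod_reverse, List.prod_inv, List.map_map]
  congr 1
  ext p
  simp

lemma arcLabel_shift (ends : E → V × V) (γ : E → Γ) (f : V → Γ) (p : E × Bool) :
    arcLabel (shiftLabel ends γ f) p
      = f (arcTail ends p) * arcLabel γ p * (f (arcHead ends p))⁻¹ := by
  obtain ⟨e, d⟩ := p
  cases d <;> simp [arcLabel, arcTail, arcHead, shiftLabel, mul_comm, mul_left_comm, mul_assoc]

lemma trailLabel_shift (ends : E → V × V) (γ : E → Γ) (f : V → Γ) :
    ∀ (T : List (E × Bool)) (p : E × Bool),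
      (p :: T).Chain' (fun p q => arcHead ends p = arcTail ends q) →
      trailLabel (shiftLabel ends γ f) (p :: T) =
        f (arcTail ends p) * trailLabel γ (p :: T) *
          (f (arcHead ends ((p :: T).getLast (List.cons_ne_nil p T))))⁻¹
  | [], p, _ => by
    simp [trailLabel_cons, arcLabel_shift, trailLabel, mul_assoc]
  | q :: T, p, h => by
    have hc : arcHead ends p = arcTail ends q := (List.isChain_cons_cons.mp h).1
    have ih := trailLabel_shift ends γ f T q (List.isChain_cons_cons.mp h).2
    rw [trailLabel_cons, ih, List.getLast_cons (List.cons_ne_nil q T),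
      trailLabel_cons γ p, arcLabel_shift, hc]
    group

lemma trailLabel_shift' (ends : E → V × V) (γ : E → Γ) (f : V → Γ)
    {T : List (E × Bool)} {u v : V} (h : IsTrailFromTo ends T u v) :
    trailLabel (shiftLabel ends γ f) T = f u * trailLabel γ T * (f v)⁻¹ := by
  obtain ⟨⟨_, hchain⟩, hh, hl⟩ := h
  cases T with
  | nil => simp at hh
  | cons p T =>
    have := trailLabel_shift ends γ f T p hchain
    rw [List.head?_cons, Option.map_some] at hh
    have hlast : (p :: T).getLast? = some ((p :: T).getLast (List.cons_ne_nil p T)) :=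
      List.getLast?_eq_getLast _
    rw [hlast, Option.map_some] at hl
    rw [this, Option.some_inj.mp hh, Option.some_inj.mp hl]

end Stmt14Aux

namespace Stmt14Aux

variable {V E Γ : Type} [CommGroup Γ]

lemma head_val {α β : Type*} {g : α → β} {B : List α} {v : β} (ne : B ≠ [])
    (h : B.head?.map g = some v) : g (B.head ne) = v := by
  rw [List.head?_eq_head ne] at h; simpa using h

lemma getLast_val {α β : Type*} {g : α → β} {B : List α} {v : β} (ne : B ≠ [])
    (h : B.getLast?.map g = some v) : g (B.getLast ne) = v := by
  rw [List.getLast?_eq_getLast ne] at h; simpa using h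

lemma revSeg_head? (ends : E → V × V) (B : List (E × Bool)) :
    (B.reverse.map revArc).head?.map (arcTail ends) = B.getLast?.map (arcHead ends) := by
  rw [List.head?_map, List.head?_reverse, Option.map_map]
  congr 1; ext p; simp

lemma revSeg_getLast? (ends : E → V × V) (B : List (E × Bool)) :
    (B.reverse.map revArc).getLast?.map (arcHead ends) = B.head?.map (arcTail ends) := by
  rw [List.map_reverse, List.getLast?_reverse, List.head?_map, Option.map_map]
  congr 1; ext p; simp

lemma revSeg_chain' (ends : E → V × V) {B : List (E × Bool)}
    (hB : B.Chain' (fun p q => arcHead ends p = arcTail ends q)) :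
    (B.reverse.map revArc).Chain' (fun p q => arcHead ends p = arcTail ends q) := by
  unfold List.Chain' at hB ⊢
  rw [List.map_reverse, List.isChain_reverse, List.isChain_map]
  refine hB.imp ?_
  intro p q h
  simpa [flip] using h.symm

lemma reverse_segment (ends : E → V × V) {A B C : List (E × Bool)} {a b v : V}
    (hBh : B.head?.map (arcTail ends) = some v)
    (hBl : B.getLast?.map (arcHead ends) = some v)
    (h : IsEulerianTrail ends (A ++ B ++ C) a b) :
    IsEulerianTrail ends (A ++ B.reverse.map revArc ++ C) a b := by
  obtain ⟨⟨⟨hnd, hchain⟩, hh, hl⟩, hall⟩ := h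
  have hBne : B ≠ [] := by rintro rfl; simp at hBh
  set B' := B.reverse.map revArc with hB'
  have hB'ne : B' ≠ [] := by simp [hB', hBne]
  have hB'h : B'.head?.map (arcTail ends) = some v := by
    rw [hB', revSeg_head? ends B]; exact hBl
  have hB'l : B'.getLast?.map (arcHead ends) = some v := by
    rw [hB', revSeg_getLast? ends B]; exact hBh
  have hperm : ((A ++ B' ++ C).map Prod.fst).Perm ((A ++ B ++ C).map Prod.fst) := by
    simp only [List.map_append]
    refine List.Perm.append (List.Perm.append (List.Perm.refl _) ?_) (List.Perm.refl _)
    have hfst : B'.map Prod.fst = (B.map Prod.fst).reverse := by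
      rw [hB', List.map_map, ← List.map_reverse]; congr 1
    rw [hfst]
    exact List.reverse_perm _
  constructor
  · refine ⟨⟨hperm.symm.nodup hnd, ?_⟩, ?_, ?_⟩
    · -- chain'
      unfold List.Chain' at hchain ⊢
      rw [List.isChain_append, List.isChain_append] at hchain ⊢
      obtain ⟨⟨hA, hB, hglAB⟩, hC, hglABC⟩ := hchain
      refine ⟨⟨hA, revSeg_chain' ends hB, ?_⟩, hC, ?_⟩
      · intro x hx y hy
        have hy0 : y = B'.head hB'ne := by
          rw [List.head?_eq_head hB'ne] at hy; simpa using hy.symm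
        have hy' : arcTail ends y = v := by rw [hy0]; exact head_val hB'ne hB'h
        have hx' : arcHead ends x = v := by
          have h1 := hglAB x hx (B.head hBne) (by rw [List.head?_eq_head hBne]; rfl)
          rw [h1]; exact head_val hBne hBh
        rw [hx', hy']
      · intro x hx y hy
        have hx0 : x = B'.getLast hB'ne := by
          rw [List.getLast?_append_of_ne_nil _ hB'ne, List.getLast?_eq_getLast hB'ne] at hx
          simpa using hx.symm
        have hx' : arcHead ends x = v := by rw [hx0]; exact getLast_val hB'ne hB'l
        have hy' : arcTail ends y = v := by
          have h1 := hglABC (B.getLast hBne)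
            (by rw [List.getLast?_append_of_ne_nil _ hBne, List.getLast?_eq_getLast hBne]; rfl)
            y hy
          rw [← h1]; exact getLast_val hBne hBl
        rw [hx', hy']
    · -- head
      rw [List.append_assoc, List.head?_append] at hh ⊢
      cases hA : A.head? with
      | some p => simpa [hA] using hh
      | none =>
        simp only [hA, Option.none_or] at hh ⊢
        rw [List.head?_append_of_ne_nil _ hBne] at hh
        rw [List.head?_append_of_ne_nil _ hB'ne]
        have hav : v = a := by
          have := head_val hBne hBh
          have h2 := head_val hBne hh
          rw [← this, h2]
        rw [hB'h, hav]
    · -- last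
      cases C with
      | nil =>
        rw [List.append_nil] at hl ⊢
        rw [List.getLast?_append_of_ne_nil _ hBne] at hl
        rw [List.getLast?_append_of_ne_nil _ hB'ne, hB'l]
        have : v = b := by
          have h1 := getLast_val hBne hBl
          have h2 := getLast_val hBne hl
          rw [← h1, h2]
        rw [this]
      | cons c C' =>
        rw [List.getLast?_append_of_ne_nil _ (List.cons_ne_nil c C')] at hl ⊢
        exact hl
  · intro e
    rw [hperm.mem_iff]
    exact hall e

end Stmt14Aux

namespace Stmt14Aux

variable {V E Γ : Type} [CommGroup Γ]

lemma segment_sq_one {ends : E → V × V} {γ : E → Γ} {a b v : V} {A B C : List (E × Bool)}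
    (hsame : ∀ T₁ T₂ : List (E × Bool), IsEulerianTrail ends T₁ a b →
        IsEulerianTrail ends T₂ a b → trailLabel γ T₁ = trailLabel γ T₂)
    (hBh : B.head?.map (arcTail ends) = some v)
    (hBl : B.getLast?.map (arcHead ends) = some v)
    (h : IsEulerianTrail ends (A ++ B ++ C) a b) :
    trailLabel γ B ^ 2 = 1 := by
  have h2 := reverse_segment ends hBh hBl h
  have heq := hsame _ _ h h2
  rw [trailLabel_append, trailLabel_append, trailLabel_append, trailLabel_append,
    trailLabel_revSeg] at heq
  rw [mul_assoc, mul_assoc] at heq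
  have h3 : trailLabel γ B = (trailLabel γ B)⁻¹ :=
    mul_right_cancel (mul_left_cancel heq)
  rw [pow_two]
  nth_rewrite 2 [h3]
  simp

lemma sq_helper {x y g Pi Pj : Γ} (hx : x ^ 2 = Pi ^ 2) (hy : y ^ 2 = Pj ^ 2)
    (hP : Pj = Pi * g) : (x * g * y⁻¹) ^ 2 = 1 := by
  have : (x * g * y⁻¹) ^ 2 = x ^ 2 * g ^ 2 * (y ^ 2)⁻¹ := by
    rw [mul_pow, mul_pow, inv_pow]
  rw [this, hx, hy, hP, mul_pow]
  group

lemma forward_sq {ends : E → V × V} {γ : E → Γ} {a b : V} {T : List (E × Bool)}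
    (hT : IsEulerianTrail ends T a b)
    (hsame : ∀ T₁ T₂ : List (E × Bool), IsEulerianTrail ends T₁ a b →
        IsEulerianTrail ends T₂ a b → trailLabel γ T₁ = trailLabel γ T₂) :
    ∃ f : V → Γ, ∀ e, (shiftLabel ends γ f e) ^ 2 = 1 := by
  obtain ⟨⟨⟨hnd, hchain⟩, hh, hl⟩, hall⟩ := hT
  set m := T.length with hm
  have hTne : T ≠ [] := by rintro rfl; simp at hh
  set vtx : ℕ → V := fun i => if h : i < m then arcTail ends (T.get ⟨i, h⟩) else b with hvtx
  set P : ℕ → Γ := fun i => trailLabel γ (T.take i) with hP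
  -- step lemma for heads
  have hvtx_succ : ∀ i (h : i < m), arcHead ends (T.get ⟨i, h⟩) = vtx (i + 1) := by
    intro i h
    by_cases h' : i + 1 < m
    · rw [hvtx]
      simp only [h', dif_pos]
      exact (List.isChain_iff_getElem.mp hchain i (by omega)).symm ▸
        (List.isChain_iff_getElem.mp hchain i (by omega))
    · have hi : i = m - 1 := by omega
      have hvb : vtx (i + 1) = b := by rw [hvtx]; simp only [h', dif_neg]; rfl
      rw [hvb]
      have hgl : T.getLast hTne = T.get ⟨i, h⟩ := by
        rw [List.getLast_eq_getElem]
        congr 1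
        omega
      rw [← hgl]
      exact getLast_val hTne hl
  have hP_succ : ∀ i (h : i < m), P (i + 1) = P i * arcLabel γ (T.get ⟨i, h⟩) := by
    intro i h
    rw [hP]
    simp only
    rw [List.take_succ, trailLabel_append]
    congr 1
    have : T[i]? = some (T.get ⟨i, h⟩) := List.getElem?_eq_getElem h
    rw [this]
    simp [trailLabel]
  -- closed segments have square-one labels
  have hsq_seg : ∀ i j, i ≤ j → j ≤ m → vtx i = vtx j → P i ^ 2 = P j ^ 2 := by
    intro i j hij hjm hv
    rcases eq_or_lt_of_le hij with rfl | hlt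
    · rfl
    have him : i < m := lt_of_lt_of_le hlt hjm
    set B : List (E × Bool) := (T.drop i).take (j - i) with hB
    have hBlen : B.length = j - i := by
      rw [hB, List.length_take, List.length_drop]
      exact min_eq_left (by omega)
    have hBne : B ≠ [] := List.ne_nil_of_length_pos (by omega)
    have htj : T.take j = T.take i ++ B := by
      rw [hB, ← List.take_add]
      congr 1
      omega
    have hdecomp : T = T.take i ++ B ++ T.drop j := by
      rw [← htj, List.take_append_drop]
    have hBhead : B.head?.map (arcTail ends) = some (vtx i) := by
      obtain ⟨n, hn⟩ : ∃ n, j - i = n + 1 := ⟨j - i - 1, by omega⟩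
      have hdr : T.drop i = T.get ⟨i, him⟩ :: T.drop (i + 1) := by
        rw [List.drop_eq_getElem_cons him]; rfl
      rw [hB, hn, hdr, List.take_succ_cons, List.head?_cons, Option.map_some]
      rw [hvtx]
      simp [him]
    have hBlast : B.getLast?.map (arcHead ends) = some (vtx j) := by
      have h1 : (T.take j).getLast? = B.getLast? := by
        rw [htj, List.getLast?_append_of_ne_nil _ hBne]
      have htjne : T.take j ≠ [] := by
        rw [htj]; simp [hBne]
      have h2 : (T.take j).getLast htjne = T.get ⟨j - 1, by omega⟩ := by
        rw [List.getLast_eq_getElem]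
        have : (T.take j).length = j := by
          rw [List.length_take]; exact min_eq_left (by omega)
        simp only [this]
        rw [List.getElem_take]
        rfl
      have hj0 : 0 < j := Nat.lt_of_le_of_lt (Nat.zero_le i) hlt
      have hj1 : j - 1 + 1 = j := Nat.succ_pred_eq_of_pos hj0
      have hjm' : j - 1 < m := by omega
      rw [← h1, List.getLast?_eq_getLast htjne, Option.map_some, h2,
        hvtx_succ (j - 1) hjm', hj1]
    have hEul : IsEulerianTrail ends (T.take i ++ B ++ T.drop j) a b := by
      rw [← hdecomp]
      exact ⟨⟨⟨hnd, hchain⟩, hh, hl⟩, hall⟩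
    have hBsq : trailLabel γ B ^ 2 = 1 := by
      rw [← hv] at hBlast
      exact segment_sq_one hsame hBhead hBlast hEul
    have hPij : P j = P i * trailLabel γ B := by
      rw [hP]; simp only; rw [htj, trailLabel_append]
    rw [hPij, mul_pow, hBsq, mul_one]
  -- the shifting function
  classical
  set f : V → Γ := fun v => if h : ∃ i, i ≤ m ∧ vtx i = v then P h.choose else 1 with hf
  have hfval : ∀ j, j ≤ m → f (vtx j) ^ 2 = P j ^ 2 := by
    intro j hj
    have hex : ∃ i, i ≤ m ∧ vtx i = vtx j := ⟨j, hj, rfl⟩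
    rw [hf]
    simp only [dif_pos hex]
    obtain ⟨hle, heq⟩ := hex.choose_spec
    rcases le_total hex.choose j with h | h
    · exact hsq_seg _ _ h hj heq
    · exact (hsq_seg _ _ h hle heq.symm).symm
  refine ⟨f, fun e => ?_⟩
  obtain ⟨⟨i, hi⟩, hpe⟩ := List.mem_iff_get.mp (hall e)
  rw [List.length_map] at hi
  have hpe' : (T.get ⟨i, hi⟩).1 = e := by
    rw [← hpe]
    simp
  have htail : arcTail ends (T.get ⟨i, hi⟩) = vtx i := by
    rw [hvtx]; simp [hi, show ¬ m ≤ i by omega]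
  have hhead := hvtx_succ i hi
  have hPs := hP_succ i hi
  have hfi := hfval i (le_of_lt hi)
  have hfi1 := hfval (i + 1) (by omega)
  rcases hd : (T.get ⟨i, hi⟩).2 with _ | _
  · -- false : arc traverses e backwards
    have he : T.get ⟨i, hi⟩ = (e, false) := by
      rw [← hpe', ← hd]
    rw [he] at htail hhead hPs
    have ht2 : (ends e).2 = vtx i := htail
    have hh2 : (ends e).1 = vtx (i + 1) := hhead
    have hlab : arcLabel γ (e, false) = (γ e)⁻¹ := by simp [arcLabel]
    rw [hlab] at hPs
    rw [shiftLabel, ht2, hh2]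
    refine sq_helper hfi1 hfi ?_
    rw [hPs, mul_assoc, inv_mul_cancel, mul_one]
  · -- true
    have he : T.get ⟨i, hi⟩ = (e, true) := by
      rw [← hpe', ← hd]
    rw [he] at htail hhead hPs
    have ht2 : (ends e).1 = vtx i := htail
    have hh2 : (ends e).2 = vtx (i + 1) := hhead
    have hlab : arcLabel γ (e, true) = γ e := by simp [arcLabel]
    rw [hlab] at hPs
    rw [shiftLabel, ht2, hh2]
    exact sq_helper hfi hfi1 hPs

end Stmt14Aux

namespace Stmt14Aux

variable {V E Γ : Type} [CommGroup Γ]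

lemma closure_sq_one {S : Set Γ} (hsq : ∀ x ∈ S, x ^ 2 = 1) :
    ∀ x ∈ Subgroup.closure S, x ^ 2 = 1 := by
  intro x hx
  refine Subgroup.closure_induction (p := fun g _ => g ^ 2 = 1) ?_ ?_ ?_ ?_ hx
  · exact fun y hy => hsq y hy
  · exact one_pow 2
  · intro u w _ _ hu hw; rw [mul_pow, hu, hw, mul_one]
  · intro u _ hu; rw [inv_pow, hu, inv_one]

lemma closure_equiv (S : Set Γ) (hS : S.Finite) (hsq : ∀ x ∈ S, x ^ 2 = 1) :
    ∃ k, Nonempty (Subgroup.closure S ≃* (Fin k → Multiplicative (ZMod 2))) := by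
  classical
  set H := Subgroup.closure S with hH
  have hsq' : ∀ x : H, x ^ 2 = 1 := by
    rintro ⟨x, hx⟩
    apply Subtype.ext
    rw [Subgroup.coe_pow]
    exact closure_sq_one hsq x hx
  letI : Module (ZMod 2) (Additive H) := AddCommGroup.zmodModule (by
    intro x
    have h1 : (Additive.toMul x) ^ 2 = 1 := hsq' _
    have h2 : Additive.ofMul ((Additive.toMul x) ^ 2) = (2 : ℕ) • x := ofMul_pow 2 _
    rw [h1] at h2
    rw [← h2]
    rfl)
  set S'' : Set (Additive H) := Additive.ofMul '' (Subtype.val ⁻¹' S) with hS''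
  haveI : Module.Finite (ZMod 2) (Additive H) := by
    rw [Module.finite_def, Submodule.fg_def]
    refine ⟨S'', (hS.preimage Subtype.val_injective.injOn).image _, ?_⟩
    rw [Submodule.eq_top_iff']
    intro x
    have key : ∀ (g : Γ) (hg : g ∈ H),
        Additive.ofMul (⟨g, hg⟩ : H) ∈ Submodule.span (ZMod 2) S'' := by
      intro g hg
      refine Subgroup.closure_induction
        (p := fun g hg => Additive.ofMul (⟨g, hg⟩ : H) ∈ Submodule.span (ZMod 2) S'')
        ?_ ?_ ?_ ?_ hg
      · intro y hy
        exact Submodule.subset_span ⟨⟨y, Subgroup.subset_closure hy⟩, hy, rfl⟩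
      · show Additive.ofMul (⟨(1 : Γ), H.one_mem⟩ : H) ∈ Submodule.span (ZMod 2) S''
        have h0 : (⟨(1 : Γ), H.one_mem⟩ : H) = 1 := rfl
        rw [h0, ofMul_one]
        exact Submodule.zero_mem _
      · intro u w hu hw hmu hmw
        show Additive.ofMul (⟨u * w, H.mul_mem hu hw⟩ : H) ∈ Submodule.span (ZMod 2) S''
        have h0 : (⟨u * w, H.mul_mem hu hw⟩ : H) = ⟨u, hu⟩ * ⟨w, hw⟩ := rfl
        rw [h0, ofMul_mul]
        exact Submodule.add_mem _ hmu hmw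
      · intro u hu hmu
        show Additive.ofMul (⟨u⁻¹, H.inv_mem hu⟩ : H) ∈ Submodule.span (ZMod 2) S''
        have h0 : (⟨u⁻¹, H.inv_mem hu⟩ : H) = (⟨u, hu⟩ : H)⁻¹ := rfl
        rw [h0, ofMul_inv]
        exact Submodule.neg_mem _ hmu
    have := key (Additive.toMul x).1 (Additive.toMul x).2
    simpa using this
  refine ⟨Module.finrank (ZMod 2) (Additive H), ⟨?_⟩⟩
  let bb := Module.finBasis (ZMod 2) (Additive H)
  exact (MulEquiv.multiplicativeAdditive H).symm.trans
    ((AddEquiv.toMultiplicative bb.equivFun.toAddEquiv).trans (MulEquiv.piMultiplicative _))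

lemma sq_of_equiv {γ' : E → Γ} {k : ℕ}
    (ψ : Subgroup.closure (Set.range γ') ≃* (Fin k → Multiplicative (ZMod 2))) :
    ∀ e, γ' e ^ 2 = 1 := by
  intro e
  have hmem : γ' e ∈ Subgroup.closure (Set.range γ') := Subgroup.subset_closure ⟨e, rfl⟩
  have hz : ∀ z : Multiplicative (ZMod 2), z ^ 2 = 1 := by decide
  have hx : (⟨γ' e, hmem⟩ : Subgroup.closure (Set.range γ')) ^ 2 = 1 := by
    apply ψ.injective
    rw [map_pow, map_one]
    funext i
    exact hz (ψ ⟨γ' e, hmem⟩ i)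
  have := congrArg (Subtype.val) hx
  rw [Subgroup.coe_pow] at this
  exact this

lemma eulerian_label_const {ends : E → V × V} {γ' : E → Γ} [Fintype E]
    (hsq : ∀ e, γ' e ^ 2 = 1) {T : List (E × Bool)} {a b : V}
    (hT : IsEulerianTrail ends T a b) :
    trailLabel γ' T = ∏ e : E, γ' e := by
  classical
  have harc : ∀ p : E × Bool, arcLabel γ' p = γ' p.1 := by
    rintro ⟨e, d⟩
    cases d
    · have hinv : (γ' e)⁻¹ = γ' e :=
        inv_eq_of_mul_eq_one_right (by rw [← pow_two]; exact hsq e)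
      simp [arcLabel, hinv]
    · simp [arcLabel]
  have h1 : trailLabel γ' T = ((T.map Prod.fst).map γ').prod := by
    unfold trailLabel
    rw [List.map_map]
    exact congrArg List.prod (List.map_congr_left (fun p _ => harc p))
  rw [h1, ← List.prod_toFinset γ' hT.1.1.1]
  have huniv : (T.map Prod.fst).toFinset = Finset.univ :=
    Finset.eq_univ_iff_forall.mpr (fun e => List.mem_toFinset.mpr (hT.2 e))
  rw [huniv]

end Stmt14Aux
/-- Let `G` be a graph labeled by `γ` in an abelian group `Γ`, with vertices `a, b`
admitting an Eulerian trail from `a` to `b`.  Then every Eulerian trail from `a` to `b`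
has the same label if and only if there is a shifting `γ'` of `γ` such that the subgroup
of `Γ` generated by all `γ'`-labels of edges is isomorphic to `(ℤ/2ℤ)^k` for some `k`. -/
theorem stmt14 {V E : Type} [Fintype V] [Fintype E] {Γ : Type} [CommGroup Γ]
    (ends : E → V × V) (γ : E → Γ) (a b : V)
    (hEul : ∃ T, IsEulerianTrail ends T a b) :
    (∀ T₁ T₂ : List (E × Bool), IsEulerianTrail ends T₁ a b →
        IsEulerianTrail ends T₂ a b → trailLabel γ T₁ = trailLabel γ T₂) ↔
      (∃ (f : V → Γ) (k : ℕ),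
        Nonempty (Subgroup.closure (Set.range (shiftLabel ends γ f)) ≃*
          (Fin k → Multiplicative (ZMod 2)))) := by
  classical
  obtain ⟨T₀, hT₀⟩ := hEul
  constructor
  · intro hsame
    obtain ⟨f, hf⟩ := Stmt14Aux.forward_sq hT₀ hsame
    obtain ⟨k, ⟨ψ⟩⟩ := Stmt14Aux.closure_equiv (Set.range (shiftLabel ends γ f))
      (Set.finite_range _) (by rintro x ⟨e, rfl⟩; exact hf e)
    exact ⟨f, k, ⟨ψ⟩⟩
  · rintro ⟨f, k, ⟨ψ⟩⟩ T₁ T₂ h₁ h₂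
    have hsq := Stmt14Aux.sq_of_equiv ψ
    have l1 := Stmt14Aux.trailLabel_shift' ends γ f h₁.1
    have l2 := Stmt14Aux.trailLabel_shift' ends γ f h₂.1
    have e1 := Stmt14Aux.eulerian_label_const hsq h₁
    have e2 := Stmt14Aux.eulerian_label_const hsq h₂
    have key : f a * trailLabel γ T₁ * (f b)⁻¹ = f a * trailLabel γ T₂ * (f b)⁻¹ := by
      rw [← l1, ← l2, e1, e2]
    exact mul_left_cancel (mul_right_cancel key)
end

section
/- Let G be a graph in which the edge-connectivity between any two vertices of a set X is at least 3, and X is maximal with this property (a 3-core). Then every connected component of G − X has at most two edges to X. -/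
/- A finite multigraph is given by a vertex type `V`, an edge type `E`, and an endpoint
map `ends : E → V × V` (each edge is given with a reference orientation; the graph is
undirected, so each edge may be traversed both ways). An arc is a pair `(e, d)`:
`(e, true)` traverses `e` from `(ends e).1` to `(ends e).2`, and `(e, false)` the other
way. -/

variable {V E : Type}

/-- The vertices of `X` are pairwise 3-edge-connected: any two of them remain connected
after removing any set of at most 2 edges. -/
def PairwiseThreeEdgeConnected (ends : E → V × V) (X : Set V) : Prop :=
  ∀ u ∈ X, ∀ v ∈ X, ∀ F : Set E, F.ncard ≤ 2 → ReachVia ends Fᶜ u v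

/-- A 3-core: a maximal set of vertices whose pairwise edge-connectivity is at least 3. -/
def IsCore (ends : E → V × V) (X : Set V) : Prop :=
  PairwiseThreeEdgeConnected ends X ∧
    ∀ Y : Set V, PairwiseThreeEdgeConnected ends Y → X ⊆ Y → Y = X

/-- Reachability in `G − X`, i.e. using only edges with both ends outside `X`. -/
def ReachOutside (ends : E → V × V) (X : Set V) : V → V → Prop :=
  Relation.ReflTransGen
    (fun u v => u ∉ X ∧ v ∉ X ∧ ∃ e, ends e = (u, v) ∨ ends e = (v, u))

section helper

variable (ends : E → V × V) (X : Set V)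

/-- simple graph on vertices outside X -/
def Gout : SimpleGraph V :=
  SimpleGraph.fromRel (fun u v => u ∉ X ∧ v ∉ X ∧ ∃ e, ends e = (u, v) ∨ ends e = (v, u))

variable {ends X}

lemma adj_out {a b : V} (h : (Gout ends X).Adj a b) :
    a ∉ X ∧ b ∉ X ∧ ∃ e, ends e = (a, b) ∨ ends e = (b, a) := by
  rcases h with ⟨-, ⟨h1, h2, e, he⟩ | ⟨h1, h2, e, he⟩⟩
  · exact ⟨h1, h2, e, he⟩
  · exact ⟨h2, h1, e, he.symm⟩

lemma reachOutside_notMem {w v : V} (hw : w ∉ X) (h : ReachOutside ends X w v) : v ∉ X := by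
  induction h with
  | refl => exact hw
  | tail _ h ih => exact h.2.1

lemma reachOutside_reachable {a b : V} (h : ReachOutside ends X a b) :
    (Gout ends X).Reachable a b := by
  induction h with
  | refl => rfl
  | @tail b c hab h ih =>
      rcases eq_or_ne b c with rfl | hne
      · exact ih
      · exact ih.trans (SimpleGraph.Adj.reachable ⟨hne, Or.inl h⟩)

lemma walk_support_notMem {a b v : V} (ha : a ∉ X) (p : (Gout ends X).Walk a b)
    (hv : v ∈ p.support) : v ∉ X := by
  induction p with
  | nil =>
      simp only [SimpleGraph.Walk.support_nil, List.mem_singleton] at hv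
      exact hv ▸ ha
  | cons h q ih =>
      rcases List.mem_cons.1 (by simpa using hv) with rfl | hv'
      · exact ha
      · exact ih (adj_out h).2.1 hv'

lemma reachVia_mono {S T : Set E} (hST : S ⊆ T) {a b : V} (h : ReachVia ends S a b) :
    ReachVia ends T a b := by
  induction h with
  | refl => exact Relation.ReflTransGen.refl
  | tail _ h' ih =>
      obtain ⟨e, he, h''⟩ := h'
      exact ih.tail ⟨e, hST he, h''⟩

lemma reachVia_symm {S : Set E} {a b : V} (h : ReachVia ends S a b) : ReachVia ends S b a := by
  induction h with
  | refl => exact Relation.ReflTransGen.refl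
  | tail _ h ih =>
      exact Relation.ReflTransGen.trans
        (Relation.ReflTransGen.single ⟨h.choose, h.choose_spec.1, h.choose_spec.2.symm⟩) ih

lemma walk_reachVia {a b : V} (p : (Gout ends X).Walk a b) :
    ReachVia ends {e | s((ends e).1, (ends e).2) ∈ p.edges} a b := by
  induction p with
  | nil => exact Relation.ReflTransGen.refl
  | @cons a c b h q ih =>
      obtain ⟨-, -, e, he⟩ := adj_out h
      refine Relation.ReflTransGen.head ⟨e, ?_, he⟩ (reachVia_mono ?_ ih)
      · simp only [Set.mem_setOf_eq, SimpleGraph.Walk.edges_cons, List.mem_cons]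
        rcases he with he | he <;> simp [he, Sym2.eq_swap]
      · intro e' he'
        simp only [Set.mem_setOf_eq, SimpleGraph.Walk.edges_cons, List.mem_cons] at he' ⊢
        exact Or.inr he'

lemma mem_walkEdges_not_cut {a b : V} {p : (Gout ends X).Walk a b} {e : E}
    (he : s((ends e).1, (ends e).2) ∈ p.edges) :
    (ends e).1 ∉ X ∧ (ends e).2 ∉ X := by
  have hadj : (Gout ends X).Adj (ends e).1 (ends e).2 :=
    p.adj_of_mem_edges he
  exact ⟨(adj_out hadj).1, (adj_out hadj).2.1⟩

/-- first-hit lemma -/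
lemma exists_firstHit {u1 u2 : V} (P : (Gout ends X).Walk u1 u2) :
    ∀ {a b : V} (Q : (Gout ends X).Walk a b), b ∈ P.support →
      ∃ m, ∃ _ : m ∈ P.support, ∃ Q' : (Gout ends X).Walk a m,
        ∀ e ∈ Q'.edges, e ∉ P.edges := by
  intro a b Q
  induction Q with
  | nil => exact fun hb => ⟨_, hb, SimpleGraph.Walk.nil, by simp⟩
  | @cons a c b h q ih =>
      intro hb
      by_cases ha : a ∈ P.support
      · exact ⟨a, ha, SimpleGraph.Walk.nil, by simp⟩
      · obtain ⟨m, hm, Q', hQ'⟩ := ih hb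
        refine ⟨m, hm, SimpleGraph.Walk.cons h Q', ?_⟩
        intro e he
        rcases List.mem_cons.1 (by simpa using he) with rfl | he'
        · exact fun hmem => ha (P.fst_mem_support_of_mem_edges hmem)
        · exact hQ' e he'

end helper

/-- For any 3-core `X` of a finite multigraph `G`, every connected component of `G − X`
has at most two edges to `X`: for each vertex `w ∉ X`, at most two edges join `X` to the
component of `G − X` containing `w`. -/

theorem stmt15 {V E : Type} [Fintype V] [Fintype E] (ends : E → V × V)
    (X : Set V) (hcore : IsCore ends X) :
    ∀ w : V, w ∉ X →
      {e : E | ¬ ((ends e).1 ∈ X ↔ (ends e).2 ∈ X) ∧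
        (ReachOutside ends X w (ends e).1 ∨ ReachOutside ends X w (ends e).2)}.ncard
        ≤ 2 := by
  classical
  intro w hw
  by_contra hcon
  rw [not_le] at hcon
  set S := {e : E | ¬ ((ends e).1 ∈ X ↔ (ends e).2 ∈ X) ∧
    (ReachOutside ends X w (ends e).1 ∨ ReachOutside ends X w (ends e).2)} with hSdef
  obtain ⟨e1, he1, e2, he2, e3, he3, h12, h13, h23⟩ :=
    (Set.two_lt_ncard (Set.toFinite S)).1 hcon
  have hend : ∀ e ∈ S, ∃ u x, u ∉ X ∧ x ∈ X ∧ ReachOutside ends X w u ∧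
      (ends e = (u, x) ∨ ends e = (x, u)) := by
    rintro e ⟨hcut, hr | hr⟩
    · have h1 : (ends e).1 ∉ X := reachOutside_notMem hw hr
      have h2 : (ends e).2 ∈ X := by tauto
      exact ⟨(ends e).1, (ends e).2, h1, h2, hr, Or.inl rfl⟩
    · have h1 : (ends e).2 ∉ X := reachOutside_notMem hw hr
      have h2 : (ends e).1 ∈ X := by tauto
      exact ⟨(ends e).2, (ends e).1, h1, h2, hr, Or.inr rfl⟩
  obtain ⟨u1, x1, hu1, hx1, hru1, hends1⟩ := hend e1 he1
  obtain ⟨u2, x2, hu2, hx2, hru2, hends2⟩ := hend e2 he2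
  obtain ⟨u3, x3, hu3, hx3, hru3, hends3⟩ := hend e3 he3
  have r1 := reachOutside_reachable hru1
  have r2 := reachOutside_reachable hru2
  have r3 := reachOutside_reachable hru3
  obtain ⟨P0⟩ := r1.symm.trans r2
  set P := P0.bypass with hPdef
  have hPpath : P.IsPath := P0.bypass_isPath
  obtain ⟨Q0⟩ := r3.symm.trans r2
  obtain ⟨m, hm, Q', hQ'⟩ := exists_firstHit P Q0 P.end_mem_support
  have hmX : m ∉ X := walk_support_notMem hu1 P hm
  set P1 := P.takeUntil m hm with hP1
  set P2 := P.dropUntil m hm with hP2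
  have hsplit : P.edges = P1.edges ++ P2.edges := by
    conv_lhs => rw [← SimpleGraph.Walk.take_spec P hm]
    rw [SimpleGraph.Walk.edges_append]
  have hnd : (P1.edges ++ P2.edges).Nodup := by
    rw [← hsplit]; exact hPpath.isTrail.edges_nodup
  have disj12 : ∀ s, s ∈ P1.edges → s ∉ P2.edges :=
    fun s h1 h2 => (List.nodup_append'.mp hnd).2.2 h1 h2
  -- the three edge sets
  set T1 : Set E := {e | s((ends e).1, (ends e).2) ∈ P1.edges} with hT1
  set T2 : Set E := {e | s((ends e).1, (ends e).2) ∈ P2.edges} with hT2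
  set T3 : Set E := {e | s((ends e).1, (ends e).2) ∈ Q'.edges} with hT3
  have hTnS : ∀ e, (e ∈ T1 ∨ e ∈ T2 ∨ e ∈ T3) → e ∉ S := by
    rintro e he ⟨hcut, -⟩
    have : (ends e).1 ∉ X ∧ (ends e).2 ∉ X := by
      rcases he with he | he | he
      · exact mem_walkEdges_not_cut (p := P1) he
      · exact mem_walkEdges_not_cut (p := P2) he
      · exact mem_walkEdges_not_cut (p := Q') he
    exact hcut (iff_of_false this.1 this.2)
  set S1 : Set E := insert e1 T1 with hS1
  set S2 : Set E := insert e2 T2 with hS2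
  set S3 : Set E := insert e3 T3 with hS3
  have hreach : ∀ i : Fin 3,
      ReachVia ends ([S1, S2, S3].get i) m ([x1, x2, x3].get i) := by
    have base : ∀ (a : V) (T : Set E) (e : E) (u x : V), ReachVia ends T m u →
        (ends e = (u, x) ∨ ends e = (x, u)) → ReachVia ends (insert e T) m x := by
      intro a T e u x hmu hux
      exact Relation.ReflTransGen.tail (reachVia_mono (Set.subset_insert e T) hmu)
        ⟨e, Set.mem_insert e T, hux⟩
    intro i
    fin_cases i
    · exact base m T1 e1 u1 x1 (reachVia_symm (walk_reachVia P1)) hends1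
    · exact base m T2 e2 u2 x2 (walk_reachVia P2) hends2
    · exact base m T3 e3 u3 x3 (reachVia_symm (walk_reachVia Q')) hends3
  -- pairwise disjointness of S1 S2 S3
  have hdisj : ∀ e, (e ∈ S1 → e ∉ S2) ∧ (e ∈ S1 → e ∉ S3) ∧ (e ∈ S2 → e ∉ S3) := by
    intro e
    have hC1 : e ∈ T1 → e ∉ S := fun h => hTnS e (Or.inl h)
    have hC2 : e ∈ T2 → e ∉ S := fun h => hTnS e (Or.inr (Or.inl h))
    have hC3 : e ∈ T3 → e ∉ S := fun h => hTnS e (Or.inr (Or.inr h))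
    have hQP : ∀ s, s ∈ Q'.edges → s ∉ P.edges := fun s hs hs' => hQ' s hs hs'
    refine ⟨?_, ?_, ?_⟩ <;> rintro (rfl | hA) (h | hB)
    · exact h12 h
    · exact hC2 hB he1
    · exact hC1 hA (h ▸ he2)
    · exact disj12 _ hA hB
    · exact h13 h
    · exact hC3 hB he1
    · exact hC1 hA (h ▸ he3)
    · exact hQP _ hB (hsplit ▸ List.mem_append_left _ hA)
    · exact h23 h
    · exact hC3 hB he2
    · exact hC2 hA (h ▸ he3)
    · exact hQP _ hB (hsplit ▸ List.mem_append_right _ hA)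
  have key : ∀ F : Set E, F.ncard ≤ 2 → ∃ x ∈ X, ReachVia ends Fᶜ m x := by
    intro F hF
    by_contra hk
    push_neg at hk
    have hhit : ∀ i : Fin 3, ∃ f ∈ F, f ∈ [S1, S2, S3].get i := by
      intro i
      by_contra hno
      push_neg at hno
      have hsub : [S1, S2, S3].get i ⊆ Fᶜ := fun f hf hfF => hno f hfF hf
      have hx : ([x1, x2, x3].get i) ∈ X := by fin_cases i <;> assumption
      exact hk _ hx (reachVia_mono hsub (hreach i))
    obtain ⟨f1, hf1F, hf1⟩ := hhit 0
    obtain ⟨f2, hf2F, hf2⟩ := hhit 1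
    obtain ⟨f3, hf3F, hf3⟩ := hhit 2
    have : 2 < F.ncard := by
      refine (Set.two_lt_ncard (Set.toFinite F)).2 ⟨f1, hf1F, f2, hf2F, f3, hf3F, ?_, ?_, ?_⟩
      · exact fun h => (hdisj f1).1 hf1 (h ▸ hf2)
      · exact fun h => (hdisj f1).2.1 hf1 (h ▸ hf3)
      · exact fun h => (hdisj f2).2.2 hf2 (h ▸ hf3)
    omega
  have hY : PairwiseThreeEdgeConnected ends (insert m X) := by
    intro u hu v hv F hF
    rcases hu with rfl | hu <;> rcases hv with rfl | hv
    · exact Relation.ReflTransGen.refl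
    · obtain ⟨x, hx, hr⟩ := key F hF
      exact Relation.ReflTransGen.trans hr (hcore.1 x hx v hv F hF)
    · obtain ⟨x, hx, hr⟩ := key F hF
      exact Relation.ReflTransGen.trans (hcore.1 u hu x hx F hF) (reachVia_symm hr)
    · exact hcore.1 u hu v hv F hF
  have hYX := hcore.2 _ hY (Set.subset_insert m X)
  exact hmX (hYX ▸ Set.mem_insert m X)
end
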